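/- Let F₂ be the free group on x and y. The elements β₁ = x y³ and βₛ = x^{s-1}(x y³)x^{s-1} for s = 2, ..., n generate a free subgroup of F₂ of rank n, with the βₛ as a free basis. -/

import Mathlib

/-!
Ping-pong for the action of `F₂` on itself by left multiplication. Write `g = xʲh` with the reduced
word of `h` not starting with `x^{±1}`. For `n ≠ 0` the reduced word of `xᵗyⁿxᵐg` is then
`xᵗ yⁿ x^{m+j} h`, which begins with `xᵗ y^{±1}`, unless `m + j = 0` and `h` begins with `y^{∓1}`,
that is, unless `g` itself begins with `x^{-m} y^{∓1}`. Let `X i` be the elements whose reduced word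
begins with `x^{i+1} y` and `Y i` those beginning with `x^{-i} y⁻¹`. Then `x^{i+1} y³ xⁱ` maps the
complement of `Y i` into `X i`, its inverse `x^{-i} y^{-3} x^{-(i+1)}` maps the complement of `X i`
into `Y i`, and all these sets are pairwise disjoint.
-/

namespace Stmt3

abbrev F2 := FreeGroup (Fin 2)

def x : F2 := FreeGroup.of 0
def y : F2 := FreeGroup.of 1

def β (s : ℕ) : F2 := x ^ (s - 1) * (x * y ^ 3) * x ^ (s - 1)

end Stmt3

namespace FreeGroup

open List

section Words

variable {α : Type*}

theorem isReduced_replicate_append {p : α × Bool} {L : List (α × Bool)} (n : ℕ)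
    (hL : IsReduced L) (hp : ∀ q ∈ L.head?, p.1 = q.1 → p.2 = q.2) :
    IsReduced (replicate n p ++ L) := by
  refine isChain_append.mpr ⟨isChain_replicate_of_rel n fun _ => rfl, hL, ?_⟩
  intro q hq r hr
  rw [Option.mem_def, getLast?_replicate] at hq
  split_ifs at hq
  cases hq
  exact hp r hr

theorem exists_eq_replicate_append_of_isReduced (a : α) :
    ∀ {L : List (α × Bool)}, IsReduced L →
      ∃ n s R, L = replicate n (a, s) ++ R ∧ ∀ q ∈ R.head?, q.1 ≠ a
  | [], _ => ⟨0, true, [], rfl, by simp⟩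
  | (c, s) :: L, hL => by
    by_cases hc : c = a
    swap
    · exact ⟨0, true, (c, s) :: L, rfl, by simpa using hc⟩
    subst hc
    obtain ⟨n, s', R, rfl, hR⟩ :=
      exists_eq_replicate_append_of_isReduced c (hL.infix (suffix_cons _ L).isInfix)
    cases n with
    | zero => exact ⟨1, s, R, rfl, hR⟩
    | succ n =>
      obtain rfl : s = s' := by
        rw [replicate_succ, cons_append, isReduced_cons_cons] at hL
        exact hL.1 rfl
      exact ⟨n + 2, s, R, rfl, hR⟩

theorem eq_of_replicate_append_cons_eq {a : α} {s s' : Bool} {q q' : α × Bool}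
    (hq : q.1 ≠ a) (hq' : q'.1 ≠ a) :
    ∀ {m n : ℕ} {l l' : List (α × Bool)},
      replicate m (a, s) ++ q :: l = replicate n (a, s') ++ q' :: l' → m = n ∧ q = q'
  | 0, 0, _, _, h => ⟨rfl, (cons_eq_cons.mp h).1⟩
  | 0, _ + 1, _, _, h => by
    rw [replicate_succ, cons_append] at h
    exact absurd (congrArg Prod.fst (cons_eq_cons.mp h).1) hq
  | _ + 1, 0, _, _, h => by
    rw [replicate_succ, cons_append] at h
    exact absurd (congrArg Prod.fst (cons_eq_cons.mp h).1).symm hq'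
  | _ + 1, _ + 1, _, _, h => by
    obtain ⟨hmn, rfl⟩ := eq_of_replicate_append_cons_eq hq hq' (cons_eq_cons.mp h).2
    exact ⟨congrArg (· + 1) hmn, rfl⟩

end Words

section Cylinders

variable {α : Type*} [DecidableEq α]

theorem toWord_of_zpow (a : α) (j : ℤ) :
    (of a ^ j).toWord = replicate j.natAbs (a, decide (0 ≤ j)) := by
  cases j with
  | ofNat n => simp [toWord_of_pow]
  | negSucc n => simp [zpow_negSucc, toWord_inv, toWord_of_pow, invRev]

theorem exists_eq_zpow_mul_toWord_eq_append (a : α) (g : FreeGroup α) :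
    ∃ (j : ℤ) (h : FreeGroup α), g = of a ^ j * h ∧
      g.toWord = (of a ^ j).toWord ++ h.toWord ∧ ∀ q ∈ h.toWord.head?, q.1 ≠ a := by
  obtain ⟨n, s, R, hg, hR⟩ :=
    exists_eq_replicate_append_of_isReduced a (isReduced_toWord (x := g))
  have hR' : IsReduced R := (hg ▸ isReduced_toWord).infix (suffix_append _ _).isInfix
  have hj : (of a ^ (if s then (n : ℤ) else -n)).toWord = replicate n (a, s) := by
    cases s
    · simp [toWord_inv, toWord_of_pow, invRev]
    · simp [toWord_of_pow]
  refine ⟨_, mk R, ?_, by rw [hj, toWord_mk, hR'.reduce_eq, hg], by rwa [toWord_mk, hR'.reduce_eq]⟩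
  rw [← mk_toWord (x := g), hg, ← mul_mk, ← hj, mk_toWord]

def cylinder (a b : α) (t : ℤ) (s : Bool) : Set (FreeGroup α) :=
  {g | ∃ l, g.toWord = (of a ^ t).toWord ++ (b, s) :: l}

variable {a b : α}

theorem natAbs_eq_and_eq_of_mem_cylinder (hab : a ≠ b) {t t' : ℤ} {s s' : Bool}
    {g : FreeGroup α} (h : g ∈ cylinder a b t s) (h' : g ∈ cylinder a b t' s') :
    t.natAbs = t'.natAbs ∧ s = s' := by
  obtain ⟨l, hl⟩ := h
  obtain ⟨l', hl'⟩ := h'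
  rw [toWord_of_zpow] at hl hl'
  obtain ⟨ht, hs⟩ := eq_of_replicate_append_cons_eq hab.symm hab.symm (hl.symm.trans hl')
  exact ⟨ht, congrArg Prod.snd hs⟩

theorem one_notMem_cylinder (t : ℤ) (s : Bool) : (1 : FreeGroup α) ∉ cylinder a b t s := by
  rintro ⟨l, hl⟩
  simp [toWord_one] at hl

theorem zpow_mul_zpow_mul_zpow_mul_mem_cylinder (hab : a ≠ b) (t m : ℤ) {n : ℤ} (hn : n ≠ 0)
    {g : FreeGroup α} (hg : g ∉ cylinder a b (-m) (!decide (0 ≤ n))) :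
    of a ^ t * of b ^ n * of a ^ m * g ∈ cylinder a b t (decide (0 ≤ n)) := by
  obtain ⟨j, h, rfl, hgw, hh⟩ := exists_eq_zpow_mul_toWord_eq_append a g
  set B := replicate n.natAbs (b, decide (0 ≤ n))
  set C := replicate (m + j).natAbs (a, decide (0 ≤ m + j)) ++ h.toWord
  have hmk : of a ^ t * of b ^ n * of a ^ m * (of a ^ j * h) =
      mk ((of a ^ t).toWord ++ (B ++ C)) := by
    simp only [B, C, ← mul_mk, ← toWord_of_zpow, mk_toWord, zpow_add]
    group
  have hC : ∀ q ∈ C.head?, b = q.1 → decide (0 ≤ n) = q.2 := by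
    rintro ⟨c, s⟩ hq rfl
    by_cases hmj : m + j = 0
    · simp only [C, hmj, Int.natAbs_zero, replicate_zero, nil_append] at hq
      by_contra hs
      refine hg ⟨h.toWord.tail, ?_⟩
      rw [hgw, show j = -m by omega, ← Bool.eq_not.mpr (Ne.symm hs), ← cons_head?_tail hq]
      rfl
    · simp [C, hmj, head?_replicate, hab] at hq
  have hBC : IsReduced (B ++ C) :=
    isReduced_replicate_append _ (isReduced_replicate_append _ isReduced_toWord
      fun q hq e => absurd e.symm (hh q hq)) hC
  have hL : IsReduced ((of a ^ t).toWord ++ (B ++ C)) := by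
    rw [toWord_of_zpow]
    refine isReduced_replicate_append _ hBC ?_
    simp [B, hn, hab, head?_replicate]
  refine ⟨replicate (n.natAbs - 1) (b, decide (0 ≤ n)) ++ C, ?_⟩
  rw [hmk, toWord_mk, hL.reduce_eq, ← cons_append, ← replicate_succ,
    Nat.sub_add_cancel (Int.natAbs_pos.mpr hn)]

end Cylinders

-- `α : Type` because `injective_lift_of_ping_pong` puts the index type and the group in one universe.
theorem injective_lift_zpow_mul_zpow_mul_zpow {α : Type} [DecidableEq α] {a b : α} (hab : a ≠ b)
    {n : ℤ} (hn : n ≠ 0) :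
    Function.Injective
      (FreeGroup.lift fun i : ℕ => of a ^ ((i : ℤ) + 1) * of b ^ n * of a ^ (i : ℤ)) := by
  have hsign : decide (0 ≤ -n) = !decide (0 ≤ n) := by
    grind
  refine injective_lift_of_ping_pong _ (fun i : ℕ => cylinder a b (i + 1) (decide (0 ≤ n)))
    (fun i : ℕ => cylinder a b (-i) (!decide (0 ≤ n))) ?_ ?_ ?_ ?_ ?_ ?_
  · refine fun i => ⟨of a ^ ((i : ℤ) + 1) * of b ^ n, ?_⟩
    simpa using zpow_mul_zpow_mul_zpow_mul_mem_cylinder hab (i + 1) 0 hn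
      (one_notMem_cylinder _ _)
  · refine fun i j hij => Set.disjoint_left.mpr fun g hi hj => hij ?_
    have := (natAbs_eq_and_eq_of_mem_cylinder hab hi hj).1
    omega
  · refine fun i j hij => Set.disjoint_left.mpr fun g hi hj => hij ?_
    have := (natAbs_eq_and_eq_of_mem_cylinder hab hi hj).1
    omega
  · refine fun i j => Set.disjoint_left.mpr fun g hi hj => ?_
    simpa using (natAbs_eq_and_eq_of_mem_cylinder hab hi hj).2
  · rintro i _ ⟨g, hg, rfl⟩
    exact zpow_mul_zpow_mul_zpow_mul_mem_cylinder hab _ _ hn (by simpa using hg)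
  · rintro i _ ⟨g, hg, rfl⟩
    have hinv : (of a ^ ((i : ℤ) + 1) * of b ^ n * of a ^ (i : ℤ))⁻¹ =
        of a ^ (-(i : ℤ)) * of b ^ (-n) * of a ^ (-((i : ℤ) + 1)) := by
      group
    have := zpow_mul_zpow_mul_zpow_mul_mem_cylinder hab (-i) (-((i : ℤ) + 1))
      (neg_ne_zero.mpr hn) (g := g) (by rwa [hsign, Bool.not_not, neg_neg])
    rwa [hsign, ← hinv] at this

end FreeGroup

namespace Stmt3

theorem stmt_3 (n : ℕ) :
    Function.Injective (FreeGroup.lift fun i : Fin n => β ((i : ℕ) + 1)) := by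
  -- The ping-pong lemma needs a nontrivial index type, so we pass through `ℕ`.
  have hlift : FreeGroup.lift (fun i : Fin n => β ((i : ℕ) + 1)) =
      (FreeGroup.lift fun i : ℕ => x ^ ((i : ℤ) + 1) * y ^ (3 : ℤ) * x ^ (i : ℤ)).comp
        (FreeGroup.map Fin.val) := by
    ext i
    simp only [β, add_tsub_cancel_right, MonoidHom.coe_comp, Function.comp_apply,
      FreeGroup.map.of, FreeGroup.lift_apply_of]
    group
  rw [hlift, MonoidHom.coe_comp]
  exact (FreeGroup.injective_lift_zpow_mul_zpow_mul_zpow (by decide) (by norm_num)).comp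
    (FreeGroup.map_injective Fin.val_injective)

end Stmt3
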